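/- arXiv:0804.4019 — 2 statements merged into one kernel-verified Lean document; each statement's English description precedes it below -/
import Mathlib

section
/- Let G be a simple graph on a finite vertex set V which is homogeneous, i.e., every graph isomorphism between two induced subgraphs of G extends to an automorphism of G. Then G admits a distinguishing coloring with 2 colors if and only if V can be partitioned into two sets B₀ and B₁ such that the induced subgraphs on B₀ and on B₁ are both rigid (their only self-isomorphisms are the identity). -/
/-!
Identify a 2-colouring with its colour class `s = c⁻¹ {0}`: an automorphism preserves the
colouring iff it stabilizes `s` (and then also `sᶜ`). If `G[s]` and `G[sᶜ]` are rigid, an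
automorphism stabilizing `s` restricts to the identity on both, so `s` is distinguishing.
Conversely, by homogeneity every automorphism of `G[s]` extends to an automorphism of `G`, which
maps `s` onto `s` and hence stabilizes it; if `s` is distinguishing this extension is the identity.
-/

namespace SimpleGraph

variable {V : Type*} {G : SimpleGraph V}

def IsRigid (G : SimpleGraph V) : Prop :=
  ∀ f : G ≃g G, ∀ x, f x = x

def IsHomogeneous (G : SimpleGraph V) : Prop :=
  ∀ (s t : Set V) (f : G.induce s ≃g G.induce t),
    ∃ g : G ≃g G, ∀ v (hv : v ∈ s), g v = (f ⟨v, hv⟩ : V)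

def IsDistinguishing {α : Type*} (G : SimpleGraph V) (c : V → α) : Prop :=
  ∀ g : G ≃g G, (∀ v, c (g v) = c v) → ∀ v, g v = v

def IsDistinguishingSet (G : SimpleGraph V) (s : Set V) : Prop :=
  ∀ g : G ≃g G, (∀ v, g v ∈ s ↔ v ∈ s) → ∀ v, g v = v

theorem IsDistinguishingSet.compl {s : Set V} (hs : G.IsDistinguishingSet s) :
    G.IsDistinguishingSet sᶜ :=
  fun g hg => hs g fun v => not_iff_not.mp (hg v)

def Iso.restrict (g : G ≃g G) (s : Set V) (hs : ∀ v, g v ∈ s ↔ v ∈ s) :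
    G.induce s ≃g G.induce s :=
  ⟨g.toEquiv.subtypeEquiv fun v => (hs v).symm, g.map_rel_iff⟩

theorem isDistinguishingSet_of_isRigid_induce {s : Set V} (hs : (G.induce s).IsRigid)
    (hsc : (G.induce sᶜ).IsRigid) : G.IsDistinguishingSet s := by
  intro g hg v
  by_cases hv : v ∈ s
  · exact congrArg Subtype.val (hs (g.restrict s hg) ⟨v, hv⟩)
  · have hgc : ∀ w, g w ∈ sᶜ ↔ w ∈ sᶜ := fun w => not_iff_not.mpr (hg w)
    exact congrArg Subtype.val (hsc (g.restrict sᶜ hgc) ⟨v, hv⟩)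

theorem IsHomogeneous.isRigid_induce {s : Set V} (hG : G.IsHomogeneous)
    (hs : G.IsDistinguishingSet s) : (G.induce s).IsRigid := by
  intro f x
  obtain ⟨g, hgf⟩ := hG s s f
  have hg : ∀ v, g v ∈ s ↔ v ∈ s := by
    refine fun v => ⟨fun hgv => ?_, fun hv => hgf v hv ▸ (f ⟨v, hv⟩).2⟩
    -- `g v` lies in the image of `f`, which agrees with the injective `g` on `s`.
    obtain ⟨y, hy⟩ := f.surjective ⟨g v, hgv⟩
    have hgy : g y = g v := (hgf y y.2).trans (congrArg Subtype.val hy)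
    exact g.injective hgy ▸ y.2
  exact Subtype.ext ((hgf x x.2).symm.trans (hs g hg x))

theorem isDistinguishing_fin_two_iff (c : V → Fin 2) :
    G.IsDistinguishing c ↔ G.IsDistinguishingSet {v | c v = 0} := by
  have hcol : ∀ a b : Fin 2, a = b ↔ (a = 0 ↔ b = 0) := by decide
  exact forall_congr' fun g => imp_congr_left (forall_congr' fun v => hcol _ _)

theorem exists_isDistinguishing_fin_two_iff :
    (∃ c : V → Fin 2, G.IsDistinguishing c) ↔ ∃ s : Set V, G.IsDistinguishingSet s := by
  classical
  refine ⟨fun ⟨c, hc⟩ => ⟨_, (isDistinguishing_fin_two_iff c).mp hc⟩, fun ⟨s, hs⟩ => ?_⟩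
  refine ⟨fun v => if v ∈ s then 0 else 1, (isDistinguishing_fin_two_iff _).mpr ?_⟩
  convert hs
  ext v
  by_cases hv : v ∈ s <;> simp [hv]

end SimpleGraph

open SimpleGraph in
theorem finite_homogeneous_graph_distinguishing_two_iff_partition_into_rigid_general
    (V : Type*) (G : SimpleGraph V)
    (hhom : ∀ (s t : Set V) (f : G.induce s ≃g G.induce t),
      ∃ g : G ≃g G, ∀ v (hv : v ∈ s), g v = (f ⟨v, hv⟩ : V)) :
    (∃ c : V → Fin 2, ∀ g : G ≃g G, (∀ v, c (g v) = c v) → ∀ v, g v = v) ↔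
    (∃ B₀ B₁ : Set V, B₀ ∪ B₁ = Set.univ ∧ Disjoint B₀ B₁ ∧
      (∀ f : G.induce B₀ ≃g G.induce B₀, ∀ x, f x = x) ∧
      (∀ f : G.induce B₁ ≃g G.induce B₁, ∀ x, f x = x)) := by
  have hG : G.IsHomogeneous := hhom
  change (∃ c : V → Fin 2, G.IsDistinguishing c) ↔ ∃ B₀ B₁ : Set V, B₀ ∪ B₁ = Set.univ ∧
    Disjoint B₀ B₁ ∧ (G.induce B₀).IsRigid ∧ (G.induce B₁).IsRigid
  rw [exists_isDistinguishing_fin_two_iff]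
  constructor
  · rintro ⟨s, hs⟩
    exact ⟨s, sᶜ, Set.union_compl_self s, disjoint_compl_right,
      hG.isRigid_induce hs, hG.isRigid_induce hs.compl⟩
  · rintro ⟨B₀, B₁, hunion, hdisj, h₀, h₁⟩
    obtain rfl : B₀ᶜ = B₁ := IsCompl.compl_eq ⟨hdisj, codisjoint_iff.mpr hunion⟩
    exact ⟨B₀, isDistinguishingSet_of_isRigid_induce h₀ h₁⟩

/-- A finite homogeneous graph admits a distinguishing 2-coloring iff its
vertex set can be partitioned into two sets inducing rigid subgraphs. -/
theorem finite_homogeneous_graph_distinguishing_two_iff_partition_into_rigid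
    (V : Type*) [Fintype V] (G : SimpleGraph V)
    (hhom : ∀ (s t : Set V) (f : G.induce s ≃g G.induce t),
      ∃ g : G ≃g G, ∀ v (hv : v ∈ s), g v = (f ⟨v, hv⟩ : V)) :
    (∃ c : V → Fin 2, ∀ g : G ≃g G, (∀ v, c (g v) = c v) → ∀ v, g v = v) ↔
    (∃ B₀ B₁ : Set V, B₀ ∪ B₁ = Set.univ ∧ Disjoint B₀ B₁ ∧
      (∀ f : G.induce B₀ ≃g G.induce B₀, ∀ x, f x = x) ∧
      (∀ f : G.induce B₁ ≃g G.induce B₁, ∀ x, f x = x)) :=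
  finite_homogeneous_graph_distinguishing_two_iff_partition_into_rigid_general V G hhom
end

section
/- Fix n ≥ 3, and let G be a countably infinite simple graph that contains no clique of size n and has the extension property for Kₙ-free graphs: for all disjoint finite sets A, B of vertices such that A contains no clique of size n−1, there exists a vertex v ∉ A ∪ B adjacent to every vertex of A and to no vertex of B. (Such a graph is the generic Kₙ-free homogeneous graph.) Then its distinguishing number is 2: there exists a coloring c of the vertices with values in Bool such that the only automorphism g of G with c ∘ g = c is the identity, while G does have a nontrivial automorphism. -/
/-!
Both halves come from the extension property.

Colouring: build an induced one-way infinite path `x₀ x₁ x₂ …` in which any two vertices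
`p ≠ q` off the path are told apart by a path vertex adjacent to `p` but not to `q`. Each new
vertex avoids everything seen so far and is joined to its predecessor only, except that `x₂ₖ₊₂`
is also joined to `p` when `(p, q)` is the `k`-th pair of an enumeration and `p` is off the path.
Colour the path. An automorphism preserving the colouring maps the path onto itself, hence acts
on it as an automorphism of the ray, which is rigid; so it fixes the path pointwise, and then
every other vertex by separation.

Nontrivial automorphism: back-and-forth starting from the swap of two vertices. A finite partial
isomorphism `f` extends to a new point `a` because the images of the neighbours of `a` contain no
`Kₙ₋₁` (its preimage together with `a` would be a `Kₙ`), so the extension property yields an image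
of `a` attached in the right way.
-/

namespace SimpleGraph

variable {V : Type*} {G : SimpleGraph V} {n : ℕ}

def HasHensonExtension (G : SimpleGraph V) (n : ℕ) : Prop :=
  ∀ A B : Finset V, Disjoint A B → (∀ s ⊆ A, ¬ G.IsNClique (n - 1) s) →
    ∃ v, v ∉ A ∧ v ∉ B ∧ (∀ a ∈ A, G.Adj v a) ∧ (∀ b ∈ B, ¬ G.Adj v b)

namespace HasHensonExtension

variable (hG : G.HasHensonExtension n)
include hG

theorem exists_adj_iff_mem {A F : Finset V} (hA : ∀ s ⊆ A, ¬ G.IsNClique (n - 1) s) :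
    ∃ v ∉ F, ∀ w ∈ F, G.Adj v w ↔ w ∈ A := by
  classical
  obtain ⟨v, hvA, hvB, hadj, hnadj⟩ := hG A (F \ A) Finset.disjoint_sdiff hA
  refine ⟨v, fun hvF => hvB (Finset.mem_sdiff.2 ⟨hvF, hvA⟩), fun w hw => ⟨fun h => ?_, hadj w⟩⟩
  by_contra hwA
  exact hnadj w (Finset.mem_sdiff.2 ⟨hw, hwA⟩) h

theorem exists_adj_iff_mem_of_isIndepSet (hn : 3 ≤ n) {A F : Finset V}
    (hA : G.IsIndepSet (A : Set V)) : ∃ v ∉ F, ∀ w ∈ F, G.Adj v w ↔ w ∈ A := by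
  refine hG.exists_adj_iff_mem fun s hsA hs => ?_
  obtain ⟨u, hu, w, hw, huw⟩ := Finset.one_lt_card.1 (show 1 < s.card by have := hs.2; omega)
  exact hA (hsA hu) (hsA hw) huw (hs.1 hu hw huw)

theorem exists_notMem (hn : 3 ≤ n) (F : Finset V) : ∃ v, v ∉ F := by
  obtain ⟨v, hv, -⟩ := hG.exists_adj_iff_mem_of_isIndepSet hn (A := ∅) (F := F) (by simp)
  exact ⟨v, hv⟩

end HasHensonExtension

variable (G) in
def IsSeparating (X : Set V) : Prop :=
  ∀ p q, p ∉ X → q ∉ X → p ≠ q → ∃ x ∈ X, G.Adj x p ∧ ¬ G.Adj x q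

theorem Iso.apply_eq_of_isSeparating {X : Set V} {g : G ≃g G} (hX : G.IsSeparating X)
    (hfix : ∀ x ∈ X, g x = x) (hgX : ∀ v, g v ∈ X ↔ v ∈ X) (v : V) : g v = v := by
  by_cases hv : v ∈ X
  · exact hfix v hv
  by_contra hne
  obtain ⟨x, hx, hxv, hxgv⟩ := hX v (g v) hv (mt (hgX v).1 hv) (Ne.symm hne)
  exact hxgv (hfix x hx ▸ g.map_adj_iff.2 hxv)

theorem hasse_nat_iso_apply (φ : hasse ℕ ≃g hasse ℕ) (i : ℕ) : φ i = i := by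
  have hadj : ∀ i j, (hasse ℕ).Adj i j ↔ i + 1 = j ∨ j + 1 = i := by
    simp [hasse_adj]
  have h0 : φ 0 = 0 := by
    by_contra h
    have hnbr : ∀ k, (hasse ℕ).Adj (φ 0) k → k = φ 1 := by
      intro k hk
      obtain ⟨j, rfl⟩ := φ.surjective k
      rw [φ.map_adj_iff, hadj] at hk
      obtain rfl : j = 1 := by omega
      rfl
    have := (hnbr (φ 0 + 1) (by simp)).trans (hnbr (φ 0 - 1) (by rw [hadj]; omega)).symm
    omega
  induction i using Nat.strong_induction_on with
  | _ i ih =>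
    match i with
    | 0 => exact h0
    | 1 =>
      have := (hadj _ _).1 (φ.map_adj_iff.2 ((hadj 1 0).2 (Or.inr rfl)))
      omega
    | i + 2 =>
      have h := (hadj _ _).1 (φ.map_adj_iff.2 ((hadj (i + 2) (i + 1)).2 (Or.inr rfl)))
      rw [ih (i + 1) (by omega)] at h
      have hne : φ (i + 2) ≠ φ i := φ.injective.ne (by omega)
      rw [ih i (by omega)] at hne
      omega

theorem Embedding.exists_iso_comp_eq {W : Type*} {H : SimpleGraph W} (φ : H ↪g G) (g : G ≃g G)
    (hg : ∀ v, v ∈ Set.range φ ↔ g v ∈ Set.range φ) :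
    ∃ ψ : H ≃g H, ∀ w, φ (ψ w) = g (φ w) := by
  let e := Equiv.ofInjective φ φ.injective
  let ψ : W ≃ W := e.trans ((g.toEquiv.subtypeEquiv hg).trans e.symm)
  have hψ : ∀ w, φ (ψ w) = g (φ w) := fun w => Equiv.apply_ofInjective_symm φ.injective _
  exact ⟨⟨ψ, by intro a b; rw [← φ.map_adj_iff, hψ, hψ, g.map_adj_iff, φ.map_adj_iff]⟩, hψ⟩

theorem Embedding.hasse_nat_apply_eq {φ : hasse ℕ ↪g G} {g : G ≃g G}
    (hg : ∀ v, v ∈ Set.range φ ↔ g v ∈ Set.range φ) (i : ℕ) : g (φ i) = φ i := by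
  obtain ⟨ψ, hψ⟩ := φ.exists_iso_comp_eq g hg
  rw [← hψ, hasse_nat_iso_apply]

def Embedding.hasseNat (x : ℕ → V) (hinj : x.Injective)
    (hadj : ∀ i j, i < j → (G.Adj (x j) (x i) ↔ j = i + 1)) : hasse ℕ ↪g G where
  toFun := x
  inj' := hinj
  map_rel_iff' {i j} := by
    simp only [Function.Embedding.coeFn_mk, hasse_adj, Nat.covBy_iff_add_one_eq]
    rcases lt_trichotomy i j with h | rfl | h
    · rw [G.adj_comm, hadj i j h]
      omega
    · simp
    · rw [hadj j i h]
      omega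

variable (G) in
noncomputable def witness [Nonempty V] (A F : Finset V) : V :=
  Classical.epsilon fun v => v ∉ F ∧ ∀ w ∈ F, G.Adj v w ↔ w ∈ A

theorem witness_spec [Nonempty V] {A F : Finset V} (h : ∃ v ∉ F, ∀ w ∈ F, G.Adj v w ↔ w ∈ A) :
    G.witness A F ∉ F ∧ ∀ w ∈ F, G.Adj (G.witness A F) w ↔ w ∈ A := by
  obtain ⟨v, hv, hadj⟩ := h
  exact Classical.epsilon_spec (p := fun v => v ∉ F ∧ ∀ w ∈ F, G.Adj v w ↔ w ∈ A) ⟨v, hv, hadj⟩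

namespace SeparatingRay

variable [DecidableEq V] (s : ℕ → V)

def target (m : ℕ) (ℓ : V) (P : Finset V) : Finset V :=
  if Even m then {ℓ} else insert ℓ ({s (m / 2).unpair.1} \ P)

/-- Forbidding `s 0, …, s m` at step `m` lets the new vertex see both entries of the pair it
handles, and keeps a vertex that is off the path when its pair is handled off the path for good. -/
def forbidden (m : ℕ) (P : Finset V) : Finset V :=
  P ∪ (Finset.range (m + 1)).image s

variable (G) [Nonempty V]

noncomputable def state : ℕ → V × Finset V
  | 0 => (s 0, {s 0})
  | m + 1 =>
    let v := G.witness (target s m (state m).1 (state m).2) (forbidden s m (state m).2)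
    (v, insert v (state m).2)

noncomputable def vertex (m : ℕ) : V := (state G s m).1

noncomputable def path (m : ℕ) : Finset V := (Finset.range (m + 1)).image (vertex G s)

theorem state_snd (m : ℕ) : (state G s m).2 = path G s m := by
  induction m with
  | zero => rfl
  | succ m ih => rw [path, Finset.range_add_one, Finset.image_insert, ← path, ← ih]; rfl

theorem vertex_succ (m : ℕ) : vertex G s (m + 1) =
    G.witness (target s m (vertex G s m) (path G s m)) (forbidden s m (path G s m)) := by
  rw [vertex, state, state_snd]; rfl

theorem vertex_mem_path {i m : ℕ} (h : i ≤ m) : vertex G s i ∈ path G s m :=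
  Finset.mem_image_of_mem _ (Finset.mem_range.2 (Nat.lt_succ_of_le h))

omit [Nonempty V] in
theorem mem_forbidden {i m : ℕ} (h : i ≤ m) (P : Finset V) : s i ∈ forbidden s m P :=
  Finset.mem_union_right _ (Finset.mem_image_of_mem _ (Finset.mem_range.2 (Nat.lt_succ_of_le h)))

omit [Nonempty V] in
theorem mem_target_of_mem {m : ℕ} {ℓ w : V} {P : Finset V} (hw : w ∈ P) :
    w ∈ target s m ℓ P ↔ w = ℓ := by
  unfold target; split_ifs <;> simp [hw]

omit [Nonempty V] in
theorem target_odd (k : ℕ) (ℓ : V) (P : Finset V) :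
    target s (2 * k + 1) ℓ P = insert ℓ ({s k.unpair.1} \ P) := by
  simp [target, show (2 * k + 1) / 2 = k by omega]

variable {G} (hG : G.HasHensonExtension n) (hn : 3 ≤ n)
include hG hn

theorem vertex_succ_spec_of_isIndepSet {m : ℕ}
    (h : G.IsIndepSet (target s m (vertex G s m) (path G s m) : Set V)) :
    vertex G s (m + 1) ∉ forbidden s m (path G s m) ∧ ∀ w ∈ forbidden s m (path G s m),
      G.Adj (vertex G s (m + 1)) w ↔ w ∈ target s m (vertex G s m) (path G s m) := by
  rw [vertex_succ]
  exact witness_spec (hG.exists_adj_iff_mem_of_isIndepSet hn h)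

theorem vertex_succ_spec (m : ℕ) :
    vertex G s (m + 1) ∉ forbidden s m (path G s m) ∧ ∀ w ∈ forbidden s m (path G s m),
      G.Adj (vertex G s (m + 1)) w ↔ w ∈ target s m (vertex G s m) (path G s m) := by
  have heven : ∀ k, G.IsIndepSet
      (target s (2 * k) (vertex G s (2 * k)) (path G s (2 * k)) : Set V) := fun k => by
    simp [target]
  obtain ⟨k, rfl | rfl⟩ := Nat.even_or_odd' m
  · exact vertex_succ_spec_of_isIndepSet s hG hn (heven k)
  refine vertex_succ_spec_of_isIndepSet s hG hn ?_
  rw [target_odd]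
  set a := s k.unpair.1
  by_cases ha : a ∈ path G s (2 * k + 1)
  · rw [Finset.sdiff_eq_empty_iff_subset.2 (Finset.singleton_subset_iff.2 ha)]
    simp
  have hne : a ≠ vertex G s (2 * k) := fun h => ha (h ▸ vertex_mem_path G s (by omega))
  have hnadj : ¬ G.Adj (vertex G s (2 * k + 1)) a := by
    simpa [target, hne] using (vertex_succ_spec_of_isIndepSet s hG hn (heven k)).2 a
      (mem_forbidden s (k.unpair_left_le.trans (by omega)) _)
  rw [Finset.sdiff_eq_self_of_disjoint (Finset.disjoint_singleton_left.2 ha), Finset.coe_insert,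
    Finset.coe_singleton]
  exact Set.pairwise_pair.2 fun _ => ⟨hnadj, fun h => hnadj h.symm⟩

theorem vertex_injective : (vertex G s).Injective := by
  refine Function.Injective.of_lt_imp_ne fun i j hij heq => ?_
  obtain ⟨m, rfl⟩ : ∃ m, j = m + 1 := ⟨j - 1, by omega⟩
  exact (vertex_succ_spec s hG hn m).1
    (Finset.mem_union_left _ (heq ▸ vertex_mem_path G s (by omega)))

theorem adj_vertex {i j : ℕ} (hij : i < j) :
    G.Adj (vertex G s j) (vertex G s i) ↔ j = i + 1 := by
  obtain ⟨m, rfl⟩ : ∃ m, j = m + 1 := ⟨j - 1, by omega⟩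
  have hi := vertex_mem_path G s (Nat.le_of_lt_succ hij)
  rw [(vertex_succ_spec s hG hn m).2 _ (Finset.mem_union_left _ hi), mem_target_of_mem s hi,
    (vertex_injective s hG hn).eq_iff]
  omega

theorem isSeparating_range_vertex (hs : s.Surjective) :
    G.IsSeparating (Set.range (vertex G s)) := by
  intro p q hp hq hpq
  obtain ⟨i, rfl⟩ := hs p
  obtain ⟨j, rfl⟩ := hs q
  have hi := Nat.left_le_pair i j
  have hj := Nat.right_le_pair i j
  set m := 2 * Nat.pair i j + 1
  have hspec := (vertex_succ_spec s hG hn m).2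
  have htarget : target s m (vertex G s m) (path G s m) =
      insert (vertex G s m) ({s i} \ path G s m) := by
    have := target_odd s (Nat.pair i j) (vertex G s m) (path G s m)
    rwa [Nat.unpair_pair] at this
  have hip : s i ∉ path G s m := fun hmem => by
    obtain ⟨_, -, h⟩ := Finset.mem_image.1 hmem
    exact hp ⟨_, h⟩
  refine ⟨_, ⟨m + 1, rfl⟩, (hspec _ (mem_forbidden s (by omega) _)).2 ?_, fun h => ?_⟩
  · simp [htarget, hip]
  have := (hspec _ (mem_forbidden s (by omega) _)).1 h
  simp only [htarget, Finset.mem_insert, Finset.mem_sdiff, Finset.mem_singleton] at this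
  obtain h | ⟨h, -⟩ := this
  · exact hq ⟨m, h.symm⟩
  · exact hpq h.symm

end SeparatingRay

theorem HasHensonExtension.exists_isSeparating_range [Countable V] (hG : G.HasHensonExtension n)
    (hn : 3 ≤ n) : ∃ φ : hasse ℕ ↪g G, G.IsSeparating (Set.range φ) := by
  classical
  obtain ⟨v, -⟩ := hG.exists_notMem hn ∅
  have : Nonempty V := ⟨v⟩
  obtain ⟨s, hs⟩ := exists_surjective_nat V
  exact ⟨Embedding.hasseNat _ (SeparatingRay.vertex_injective s hG hn)
    fun i j => SeparatingRay.adj_vertex s hG hn, SeparatingRay.isSeparating_range_vertex s hG hn hs⟩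

theorem HasHensonExtension.exists_distinguishing_coloring [Countable V]
    (hG : G.HasHensonExtension n) (hn : 3 ≤ n) :
    ∃ c : V → Bool, ∀ g : G ≃g G, (∀ v, c (g v) = c v) → ∀ v, g v = v := by
  classical
  obtain ⟨φ, hφ⟩ := hG.exists_isSeparating_range hn
  refine ⟨fun v => decide (v ∈ Set.range φ), fun g hg => ?_⟩
  have hgX : ∀ v, g v ∈ Set.range φ ↔ v ∈ Set.range φ := fun v => by simpa using hg v
  refine Iso.apply_eq_of_isSeparating hφ ?_ hgX
  rintro _ ⟨i, rfl⟩
  exact Embedding.hasse_nat_apply_eq (fun v => (hgX v).symm) i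

-- An `abbrev`, so that it carries the inclusion order of `Finset (V × V)`.
variable (G) in
abbrev FinPartialIso : Type _ :=
  {f : Finset (V × V) //
    ∀ p ∈ f, ∀ q ∈ f, (p.1 = q.1 ↔ p.2 = q.2) ∧ (G.Adj p.1 q.1 ↔ G.Adj p.2 q.2)}

namespace FinPartialIso

theorem fst_eq_iff {f : G.FinPartialIso} {p q : V × V} (hp : p ∈ f.1) (hq : q ∈ f.1) :
    p.1 = q.1 ↔ p = q :=
  ⟨fun h => Prod.ext h ((f.2 p hp q hq).1.1 h), fun h => h ▸ rfl⟩

theorem snd_eq_iff {f : G.FinPartialIso} {p q : V × V} (hp : p ∈ f.1) (hq : q ∈ f.1) :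
    p.2 = q.2 ↔ p = q := by
  rw [← (f.2 p hp q hq).1, fst_eq_iff hp hq]

def Extends (f : G.FinPartialIso) (a b : V) : Prop :=
  ∀ p ∈ f.1, (p.1 = a ↔ p.2 = b) ∧ (G.Adj p.1 a ↔ G.Adj p.2 b)

variable [DecidableEq V]

def symm (f : G.FinPartialIso) : G.FinPartialIso :=
  ⟨f.1.image Prod.swap, by
    simp only [Finset.mem_image]
    rintro _ ⟨p, hp, rfl⟩ _ ⟨q, hq, rfl⟩
    exact ⟨(f.2 p hp q hq).1.symm, (f.2 p hp q hq).2.symm⟩⟩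

theorem mem_symm {f : G.FinPartialIso} {a b : V} : (a, b) ∈ f.symm.1 ↔ (b, a) ∈ f.1 := by
  simp [symm]

def insert (f : G.FinPartialIso) {a b : V} (h : f.Extends a b) : G.FinPartialIso :=
  ⟨Insert.insert (a, b) f.1, by
    simp only [Finset.mem_insert]
    rintro p (rfl | hp) q (rfl | hq)
    · simp
    · exact ⟨eq_comm.trans ((h q hq).1.trans eq_comm),
        (G.adj_comm _ _).trans ((h q hq).2.trans (G.adj_comm _ _))⟩
    · exact h p hp
    · exact f.2 p hp q hq⟩

theorem isNClique_preimage (f : G.FinPartialIso) {s : Finset V} {k : ℕ}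
    (hs : s ⊆ f.1.image Prod.snd) (hc : G.IsNClique k s) :
    G.IsNClique k ((f.1.filter (·.2 ∈ s)).image Prod.fst) := by
  set Q := f.1.filter (·.2 ∈ s)
  have hQ : ∀ {p}, p ∈ Q → p ∈ f.1 ∧ p.2 ∈ s := fun hp => Finset.mem_filter.1 hp
  have himage : Q.image Prod.snd = s := by
    refine Finset.Subset.antisymm (fun u hu => ?_) fun u hu => ?_
    · obtain ⟨p, hp, rfl⟩ := Finset.mem_image.1 hu
      exact (hQ hp).2
    · obtain ⟨p, hp, rfl⟩ := Finset.mem_image.1 (hs hu)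
      exact Finset.mem_image_of_mem _ (Finset.mem_filter.2 ⟨hp, hu⟩)
  refine ⟨?_, ?_⟩
  · simp only [Finset.coe_image, Set.Pairwise, Set.mem_image, Finset.mem_coe]
    rintro _ ⟨p, hp, rfl⟩ _ ⟨q, hq, rfl⟩ hpq
    have hpq' := (f.2 p (hQ hp).1 q (hQ hq).1)
    rw [hpq'.2]
    exact hc.1 (hQ hp).2 (hQ hq).2 (mt hpq'.1.2 hpq)
  · rw [Finset.card_image_of_injOn fun p hp q hq => (fst_eq_iff (hQ hp).1 (hQ hq).1).1, ← hc.2,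
      ← himage, Finset.card_image_of_injOn fun p hp q hq => (snd_eq_iff (hQ hp).1 (hQ hq).1).1]

variable (hforth : ∀ (f : G.FinPartialIso) (a : V), ∃ b, f.Extends a b)
include hforth

def definedAtLeft (a : V) : Order.Cofinal G.FinPartialIso where
  carrier := {f | ∃ b, (a, b) ∈ f.1}
  isCofinal f := by
    obtain ⟨b, hb⟩ := hforth f a
    exact ⟨f.insert hb, ⟨b, Finset.mem_insert_self _ _⟩, Finset.subset_insert _ _⟩

def definedAtRight (b : V) : Order.Cofinal G.FinPartialIso where
  carrier := {f | ∃ a, (a, b) ∈ f.1}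
  isCofinal f := by
    obtain ⟨g, ⟨a, ha⟩, hfg⟩ := (definedAtLeft hforth b).isCofinal f.symm
    refine ⟨g.symm, ⟨a, mem_symm.2 ha⟩, fun p hp => ?_⟩
    exact mem_symm.2 (hfg (mem_symm.2 (by simpa using hp)))

theorem exists_iso_of_forth [Countable V] (f₀ : G.FinPartialIso) :
    ∃ φ : G ≃g G, ∀ p ∈ f₀.1, φ p.1 = p.2 := by
  have := Encodable.ofCountable V
  let D : V ⊕ V → Order.Cofinal G.FinPartialIso :=
    Sum.elim (definedAtLeft hforth) (definedAtRight hforth)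
  let I := Order.idealOfCofinals f₀ D
  have hcompat : ∀ f ∈ I, ∀ g ∈ I, ∀ p ∈ f.1, ∀ q ∈ g.1,
      (p.1 = q.1 ↔ p.2 = q.2) ∧ (G.Adj p.1 q.1 ↔ G.Adj p.2 q.2) := by
    intro f hf g hg p hp q hq
    obtain ⟨h, -, hfh, hgh⟩ := I.directed f hf g hg
    exact h.2 p (hfh hp) q (hgh hq)
  have hfwd : ∀ a, ∃ b, ∃ f ∈ I, (a, b) ∈ f.1 := fun a => by
    obtain ⟨f, ⟨b, hb⟩, hf⟩ := Order.cofinal_meets_idealOfCofinals f₀ D (Sum.inl a)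
    exact ⟨b, f, hf, hb⟩
  have hbwd : ∀ b, ∃ a, ∃ f ∈ I, (a, b) ∈ f.1 := fun b => by
    obtain ⟨f, ⟨a, ha⟩, hf⟩ := Order.cofinal_meets_idealOfCofinals f₀ D (Sum.inr b)
    exact ⟨a, f, hf, ha⟩
  choose φ fφ hfφ hφ using hfwd
  choose ψ fψ hfψ hψ using hbwd
  refine ⟨⟨⟨φ, ψ, fun a => ?_, fun b => ?_⟩, fun {a a'} => ?_⟩, fun p hp => ?_⟩
  · exact (hcompat _ (hfψ _) _ (hfφ a) _ (hψ _) _ (hφ a)).1.2 rfl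
  · exact (hcompat _ (hfφ _) _ (hfψ b) _ (hφ _) _ (hψ b)).1.1 rfl
  · exact (hcompat _ (hfφ a) _ (hfφ a') _ (hφ a) _ (hφ a')).2.symm
  · exact (hcompat _ (hfφ _) _ (Order.mem_idealOfCofinals f₀ D) _ (hφ p.1) _ hp).1.1 rfl

end FinPartialIso

theorem HasHensonExtension.exists_extends (hG : G.HasHensonExtension n) (hn : n ≠ 0)
    (hfree : G.CliqueFree n) (f : G.FinPartialIso) (a : V) : ∃ b, f.Extends a b := by
  classical
  by_cases hdom : ∃ q ∈ f.1, q.1 = a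
  · obtain ⟨q, hq, rfl⟩ := hdom
    exact ⟨q.2, fun p hp => f.2 p hp q hq⟩
  push Not at hdom
  set A := (f.1.filter fun p : V × V => G.Adj a p.1).image Prod.snd
  have hA : ∀ p ∈ f.1, p.2 ∈ A ↔ G.Adj a p.1 := by
    intro p hp
    simp only [A, Finset.mem_image, Finset.mem_filter]
    constructor
    · rintro ⟨q, ⟨hq, hadj⟩, hqp⟩
      rwa [(FinPartialIso.snd_eq_iff hq hp).1 hqp] at hadj
    · exact fun h => ⟨p, ⟨hp, h⟩, rfl⟩
  have hclique : ∀ s ⊆ A, ¬ G.IsNClique (n - 1) s := by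
    intro s hsA hs
    have hpre := f.isNClique_preimage
      (hsA.trans (Finset.image_subset_image (Finset.filter_subset _ _))) hs
    have hins := hpre.insert (a := a) (by
      simp only [Finset.mem_image, Finset.mem_filter]
      rintro _ ⟨p, ⟨hp, hps⟩, rfl⟩
      exact (hA p hp).1 (hsA hps))
    exact hfree _ (Nat.sub_add_cancel (Nat.one_le_iff_ne_zero.2 hn) ▸ hins)
  obtain ⟨b, hbF, hb⟩ := hG.exists_adj_iff_mem (F := f.1.image Prod.snd) hclique
  refine ⟨b, fun p hp => ⟨iff_of_false (hdom p hp) ?_, ?_⟩⟩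
  · rintro rfl
    exact hbF (Finset.mem_image_of_mem _ hp)
  · rw [G.adj_comm _ b, hb p.2 (Finset.mem_image_of_mem _ hp), hA p hp, G.adj_comm]

theorem HasHensonExtension.exists_iso_apply_ne [Countable V] (hG : G.HasHensonExtension n)
    (hn : 3 ≤ n) (hfree : G.CliqueFree n) : ∃ g : G ≃g G, ∃ v, g v ≠ v := by
  classical
  obtain ⟨u, -⟩ := hG.exists_notMem hn ∅
  obtain ⟨v, hv⟩ := hG.exists_notMem hn {u}
  let swap : G.FinPartialIso := ⟨{(u, v), (v, u)}, by
    simp only [Finset.mem_insert, Finset.mem_singleton]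
    rintro p (rfl | rfl) q (rfl | rfl) <;> simp [eq_comm, G.adj_comm]⟩
  obtain ⟨g, hg⟩ := FinPartialIso.exists_iso_of_forth (hG.exists_extends (by omega) hfree) swap
  exact ⟨g, u, by rw [hg (u, v) (by simp [swap])]; simpa [eq_comm] using hv⟩

end SimpleGraph

theorem generic_Kn_free_graph_distinguishing_number_two_general
    (n : ℕ) (hn : 3 ≤ n) (V : Type*) [Countable V]
    (G : SimpleGraph V) (hfree : G.CliqueFree n)
    (hext : ∀ A B : Finset V, Disjoint A B → (∀ s ⊆ A, ¬ G.IsNClique (n - 1) s) →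
      ∃ v, v ∉ A ∧ v ∉ B ∧ (∀ a ∈ A, G.Adj v a) ∧ (∀ b ∈ B, ¬ G.Adj v b)) :
    (∃ c : V → Bool, ∀ g : G ≃g G, (∀ v, c (g v) = c v) → ∀ v, g v = v) ∧
    (∃ g : G ≃g G, ∃ v, g v ≠ v) :=
  have hG : G.HasHensonExtension n := hext
  ⟨hG.exists_distinguishing_coloring hn, hG.exists_iso_apply_ne hn hfree⟩

/-- For `n ≥ 3`, a countably infinite `Kₙ`-free graph with the extension
property for `Kₙ`-free graphs (the generic `Kₙ`-free homogeneous graph) has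
distinguishing number 2. -/
theorem generic_Kn_free_graph_distinguishing_number_two
    (n : ℕ) (hn : 3 ≤ n) (V : Type*) [Countable V] [Infinite V]
    (G : SimpleGraph V) (hfree : G.CliqueFree n)
    (hext : ∀ A B : Finset V, Disjoint A B → (∀ s ⊆ A, ¬ G.IsNClique (n - 1) s) →
      ∃ v, v ∉ A ∧ v ∉ B ∧ (∀ a ∈ A, G.Adj v a) ∧ (∀ b ∈ B, ¬ G.Adj v b)) :
    (∃ c : V → Bool, ∀ g : G ≃g G, (∀ v, c (g v) = c v) → ∀ v, g v = v) ∧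
    (∃ g : G ≃g G, ∃ v, g v ≠ v) :=
  generic_Kn_free_graph_distinguishing_number_two_general n hn V G hfree hext
end
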